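/- Let u ∈ H^3(S) and ρ ∈ H^2(S) be periodic with μ(u) = μ ∈ ℝ, and set m = u_{xx}. If u and ρ evolve by the μ-Hunter–Saxton system, then d/dt ∫_S m² dx = 3∫_S u_x m² dx − 2∫_S m ρ ρ_x dx; in particular, if u_x ≤ M₁ pointwise, then d/dt ∫_S m² dx ≤ (3M₁ + ‖ρ‖_{L^∞}) ∫_S m² dx + ‖ρ‖_{L^∞} ∫_S ρ_x² dx. -/

import Mathlib

/-!
Differentiating under the integral sign, `d/dt ∫ m² = ∫ 2 m m_t`. After substituting the first
equation for `m_t`, the integrand `2 m m_t` is `3 u_x m² − 2 m ρ ρ_x` plus the `x`-derivative of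
the periodic flux `−2μ u_x² + u m² + γ₁ m²`, which integrates to zero over a period. The bound
then follows from `u_x ≤ M₁` and `−2 m ρ ρ_x ≤ ‖ρ‖_∞ (m² + ρ_x²)`, where `‖ρ‖_∞` is finite
because `ρ` is continuous and periodic.
-/

open MeasureTheory intervalIntegral Function Set

theorem Function.Periodic.periodic_of_hasDerivAt {f f' : ℝ → ℝ} {c : ℝ} (hf : Periodic f c)
    (hderiv : ∀ x, HasDerivAt f (f' x) x) : Periodic f' c := fun x => by
  have h := (hderiv (x + c)).comp_add_const x c
  rw [show (fun y => f (y + c)) = f from funext hf] at h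
  exact h.unique (hderiv x)

theorem Function.Periodic.integral_eq_zero_of_hasDerivAt {f f' : ℝ → ℝ} {c : ℝ} (a : ℝ)
    (hf : Periodic f c) (hderiv : ∀ x, HasDerivAt f (f' x) x)
    (hint : IntervalIntegrable f' volume a (a + c)) : ∫ x in a..a + c, f' x = 0 := by
  rw [integral_eq_sub_of_hasDerivAt (fun x _ => hderiv x) hint, hf, sub_self]

theorem hasDerivAt_intervalIntegral_of_continuous {F F' : ℝ → ℝ → ℝ} {a b t : ℝ}
    (hF : ∀ s, Continuous (F s)) (hF' : Continuous (uncurry F'))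
    (hderiv : ∀ s x, HasDerivAt (F · x) (F' s x) s) :
    HasDerivAt (fun s => ∫ x in a..b, F s x) (∫ x in a..b, F' t x) t := by
  obtain ⟨C, hC⟩ := ((isCompact_closedBall t 1).prod (isCompact_uIcc (a := a) (b := b))
    ).exists_bound_of_continuousOn hF'.continuousOn
  refine (hasDerivAt_integral_of_dominated_loc_of_deriv_le (bound := fun _ => C)
    (Metric.closedBall_mem_nhds t one_pos) (.of_forall fun s => (hF s).aestronglyMeasurable)
    ((hF t).intervalIntegrable a b) (hF'.uncurry_left t).aestronglyMeasurable ?_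
    intervalIntegrable_const (.of_forall fun x _ s _ => hderiv s x)).2
  exact .of_forall fun x hx s hs => hC (s, x) ⟨hs, uIoc_subset_uIcc hx⟩

theorem Function.Periodic.abs_le_iSup_abs {f : ℝ → ℝ} {c : ℝ} (hf : Periodic f c) (hc : c ≠ 0)
    (hcont : Continuous f) (x : ℝ) : |f x| ≤ ⨆ y, |f y| :=
  le_ciSup ((hf.comp abs).isBounded_of_continuous hc hcont.abs).bddAbove x

theorem neg_two_mul_mul_mul_le {a r b S : ℝ} (hr : |r| ≤ S) :
    -2 * (a * r * b) ≤ S * (a ^ 2 + b ^ 2) := by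
  have hab : 2 * |a * b| ≤ a ^ 2 + b ^ 2 := by
    rw [abs_mul]; nlinarith [sq_nonneg (|a| - |b|), sq_abs a, sq_abs b]
  calc -2 * (a * r * b) ≤ |r| * (2 * |a * b|) :=
        (le_abs_self _).trans_eq (by simp only [abs_mul, abs_neg, abs_two]; ring)
    _ ≤ S * (a ^ 2 + b ^ 2) := mul_le_mul hr hab (by positivity) ((abs_nonneg r).trans hr)

theorem integral_mul_sq_le {f g : ℝ → ℝ} {a b M : ℝ} (hab : a ≤ b) (hf : Continuous f)
    (hg : Continuous g) (hM : ∀ x, f x ≤ M) :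
    ∫ x in a..b, f x * g x ^ 2 ≤ M * ∫ x in a..b, g x ^ 2 := by
  rw [← intervalIntegral.integral_const_mul]
  exact integral_mono_on hab ((hf.mul (hg.pow 2)).intervalIntegrable a b)
    ((continuous_const.mul (hg.pow 2)).intervalIntegrable a b)
    fun x _ => mul_le_mul_of_nonneg_right (hM x) (sq_nonneg _)

theorem neg_two_mul_integral_mul_mul_le {f r g : ℝ → ℝ} {a b S : ℝ} (hab : a ≤ b)
    (hf : Continuous f) (hr : Continuous r) (hg : Continuous g) (hS : ∀ x, |r x| ≤ S) :
    -2 * ∫ x in a..b, f x * r x * g x ≤ S * ((∫ x in a..b, f x ^ 2) + ∫ x in a..b, g x ^ 2) := by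
  rw [← intervalIntegral.integral_const_mul,
    ← integral_add (f := fun x => f x ^ 2) (g := fun x => g x ^ 2)
      ((hf.pow 2).intervalIntegrable a b) ((hg.pow 2).intervalIntegrable a b),
    ← intervalIntegral.integral_const_mul]
  exact integral_mono_on hab (((hf.mul hr).mul hg).const_mul _ |>.intervalIntegrable a b)
    (((hf.pow 2).add (hg.pow 2)).const_mul _ |>.intervalIntegrable a b)
    fun x _ => neg_two_mul_mul_mul_le (hS x)

theorem integral_two_mul_uxx_mul_uxxt_eq {γ₁ μ : ℝ} {u ux uxx uxxx uxxt ρ ρx : ℝ → ℝ}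
    (hcu : Continuous u) (hcux : Continuous ux) (hcuxx : Continuous uxx)
    (hcuxxx : Continuous uxxx) (hcρ : Continuous ρ) (hcρx : Continuous ρx) (hpu : Periodic u 1)
    (hux : ∀ x, HasDerivAt u (ux x) x) (huxx : ∀ x, HasDerivAt ux (uxx x) x)
    (huxxx : ∀ x, HasDerivAt uxx (uxxx x) x)
    (hpde : ∀ x, -uxxt x = 2 * μ * ux x - 2 * ux x * uxx x - u x * uxxx x
        + ρ x * ρx x - γ₁ * uxxx x) :
    ∫ x in (0:ℝ)..1, 2 * uxx x * uxxt x
      = 3 * (∫ x in (0:ℝ)..1, ux x * uxx x ^ 2) - 2 * ∫ x in (0:ℝ)..1, uxx x * ρ x * ρx x := by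
  have hpux : Periodic ux 1 := hpu.periodic_of_hasDerivAt hux
  have hpuxx : Periodic uxx 1 := hpux.periodic_of_hasDerivAt huxx
  set flux : ℝ → ℝ := fun x => -(2 * μ) * ux x ^ 2 + u x * uxx x ^ 2 + γ₁ * uxx x ^ 2
  set flux' : ℝ → ℝ := fun x => -(2 * μ) * (2 * ux x * uxx x)
      + (ux x * uxx x ^ 2 + u x * (2 * uxx x * uxxx x)) + γ₁ * (2 * uxx x * uxxx x)
  have hflux : ∀ x, HasDerivAt flux (flux' x) x := fun x => by
    have hsq {f f' : ℝ → ℝ} (hf : HasDerivAt f (f' x) x) :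
        HasDerivAt (fun y => f y ^ 2) (2 * f x * f' x) x :=
      (hf.pow 2).congr_deriv (by push_cast; ring)
    exact (((hsq (huxx x)).const_mul _).add ((hux x).mul (hsq (huxxx x)))).add
      ((hsq (huxxx x)).const_mul _)
  have hcflux' : Continuous flux' := by fun_prop
  have hflux_int : ∫ x in (0:ℝ)..1, flux' x = 0 := by
    simpa using (show Periodic flux 1 from fun x => by simp only [flux, hpu x, hpux x, hpuxx x]
      ).integral_eq_zero_of_hasDerivAt 0 hflux (hcflux'.intervalIntegrable _ _)
  have hpoint : ∀ x, 2 * uxx x * uxxt x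
      = 3 * (ux x * uxx x ^ 2) - 2 * (uxx x * ρ x * ρx x) + flux' x := fun x => by
    linear_combination (-2 * uxx x) * hpde x
  have hi1 : IntervalIntegrable (fun x => ux x * uxx x ^ 2) volume 0 1 :=
    (hcux.mul (hcuxx.pow 2)).intervalIntegrable 0 1
  have hi2 : IntervalIntegrable (fun x => uxx x * ρ x * ρx x) volume 0 1 :=
    ((hcuxx.mul hcρ).mul hcρx).intervalIntegrable 0 1
  rw [integral_congr fun x _ => hpoint x, integral_add ((hi1.const_mul 3).sub (hi2.const_mul 2))
    (hcflux'.intervalIntegrable _ _), hflux_int, add_zero,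
    integral_sub (hi1.const_mul 3) (hi2.const_mul 2), intervalIntegral.integral_const_mul,
    intervalIntegral.integral_const_mul]

theorem m_energy_identity_general
    (γ₁ μ M₁ : ℝ) (u ux uxx uxxx uxxt ρ ρx : ℝ → ℝ → ℝ)
    (hcu : Continuous (Function.uncurry u))
    (hcux : Continuous (Function.uncurry ux))
    (hcuxx : Continuous (Function.uncurry uxx))
    (hcuxxx : Continuous (Function.uncurry uxxx))
    (hcuxxt : Continuous (Function.uncurry uxxt))
    (hcρ : Continuous (Function.uncurry ρ))
    (hcρx : Continuous (Function.uncurry ρx))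
    (hpu : ∀ t x : ℝ, u t (x + 1) = u t x)
    (hpρ : ∀ t x : ℝ, ρ t (x + 1) = ρ t x)
    (hux : ∀ t x : ℝ, HasDerivAt (fun y => u t y) (ux t x) x)
    (huxx : ∀ t x : ℝ, HasDerivAt (fun y => ux t y) (uxx t x) x)
    (huxxx : ∀ t x : ℝ, HasDerivAt (fun y => uxx t y) (uxxx t x) x)
    (huxxt : ∀ t x : ℝ, HasDerivAt (fun s => uxx s x) (uxxt t x) t)
    (hpde1 : ∀ t x : ℝ,
      -(uxxt t x) = 2 * μ * ux t x - 2 * ux t x * uxx t x - u t x * uxxx t x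
        + ρ t x * ρx t x - γ₁ * uxxx t x) :
    ∀ t : ℝ,
      HasDerivAt (fun s => ∫ x in (0:ℝ)..1, (uxx s x) ^ 2)
        (3 * (∫ x in (0:ℝ)..1, ux t x * (uxx t x) ^ 2)
          - 2 * ∫ x in (0:ℝ)..1, uxx t x * ρ t x * ρx t x) t ∧
      ((∀ x : ℝ, ux t x ≤ M₁) →
        3 * (∫ x in (0:ℝ)..1, ux t x * (uxx t x) ^ 2)
            - 2 * (∫ x in (0:ℝ)..1, uxx t x * ρ t x * ρx t x)
          ≤ (3 * M₁ + ⨆ x : ℝ, |ρ t x|) * (∫ x in (0:ℝ)..1, (uxx t x) ^ 2)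
            + (⨆ x : ℝ, |ρ t x|) * ∫ x in (0:ℝ)..1, (ρx t x) ^ 2) := by
  intro t
  refine ⟨?_, fun hM => ?_⟩
  · rw [← integral_two_mul_uxx_mul_uxxt_eq (hcu.uncurry_left t) (hcux.uncurry_left t)
      (hcuxx.uncurry_left t) (hcuxxx.uncurry_left t) (hcρ.uncurry_left t) (hcρx.uncurry_left t)
      (hpu t) (hux t) (huxx t) (huxxx t) (hpde1 t)]
    exact hasDerivAt_intervalIntegral_of_continuous (F' := fun s x => 2 * uxx s x * uxxt s x)
      (fun s => (hcuxx.uncurry_left s).pow 2) ((continuous_const.mul hcuxx).mul hcuxxt)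
      fun s x => ((huxxt s x).pow 2).congr_deriv (by push_cast; ring)
  · have hρ_le := Periodic.abs_le_iSup_abs (hpρ t) one_ne_zero (hcρ.uncurry_left t)
    have hux_term := integral_mul_sq_le zero_le_one (hcux.uncurry_left t)
      (hcuxx.uncurry_left t) hM
    have hρ_term := neg_two_mul_integral_mul_mul_le zero_le_one (hcuxx.uncurry_left t)
      (hcρ.uncurry_left t) (hcρx.uncurry_left t) hρ_le
    linarith

/-- For a smooth periodic solution of the μ-Hunter–Saxton system with `μ(u) = μ` and
`m = u_{xx}`: `d/dt ∫_S m² dx = 3∫_S u_x m² dx − 2∫_S m ρ ρ_x dx`; in particular, if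
`u_x ≤ M₁` pointwise, then
`d/dt ∫_S m² dx ≤ (3M₁ + ‖ρ‖_∞) ∫_S m² dx + ‖ρ‖_∞ ∫_S ρ_x² dx`. -/
theorem m_energy_identity
    (γ₁ γ₂ μ M₁ : ℝ) (u ux uxx uxxx uxxt ρ ρt ρx : ℝ → ℝ → ℝ)
    (hcu : Continuous (Function.uncurry u))
    (hcux : Continuous (Function.uncurry ux))
    (hcuxx : Continuous (Function.uncurry uxx))
    (hcuxxx : Continuous (Function.uncurry uxxx))
    (hcuxxt : Continuous (Function.uncurry uxxt))
    (hcρ : Continuous (Function.uncurry ρ))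
    (hcρx : Continuous (Function.uncurry ρx))
    (hpu : ∀ t x : ℝ, u t (x + 1) = u t x)
    (hpρ : ∀ t x : ℝ, ρ t (x + 1) = ρ t x)
    (hux : ∀ t x : ℝ, HasDerivAt (fun y => u t y) (ux t x) x)
    (huxx : ∀ t x : ℝ, HasDerivAt (fun y => ux t y) (uxx t x) x)
    (huxxx : ∀ t x : ℝ, HasDerivAt (fun y => uxx t y) (uxxx t x) x)
    (huxxt : ∀ t x : ℝ, HasDerivAt (fun s => uxx s x) (uxxt t x) t)
    (hρt : ∀ t x : ℝ, HasDerivAt (fun s => ρ s x) (ρt t x) t)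
    (hρx : ∀ t x : ℝ, HasDerivAt (fun y => ρ t y) (ρx t x) x)
    (hμ : ∀ t : ℝ, (∫ x in (0:ℝ)..1, u t x) = μ)
    (hpde1 : ∀ t x : ℝ,
      -(uxxt t x) = 2 * μ * ux t x - 2 * ux t x * uxx t x - u t x * uxxx t x
        + ρ t x * ρx t x - γ₁ * uxxx t x)
    (hpde2 : ∀ t x : ℝ,
      ρt t x = ρx t x * u t x + ρ t x * ux t x + 2 * γ₂ * ρx t x) :
    ∀ t : ℝ,
      HasDerivAt (fun s => ∫ x in (0:ℝ)..1, (uxx s x) ^ 2)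
        (3 * (∫ x in (0:ℝ)..1, ux t x * (uxx t x) ^ 2)
          - 2 * ∫ x in (0:ℝ)..1, uxx t x * ρ t x * ρx t x) t ∧
      ((∀ x : ℝ, ux t x ≤ M₁) →
        3 * (∫ x in (0:ℝ)..1, ux t x * (uxx t x) ^ 2)
            - 2 * (∫ x in (0:ℝ)..1, uxx t x * ρ t x * ρx t x)
          ≤ (3 * M₁ + ⨆ x : ℝ, |ρ t x|) * (∫ x in (0:ℝ)..1, (uxx t x) ^ 2)
            + (⨆ x : ℝ, |ρ t x|) * ∫ x in (0:ℝ)..1, (ρx t x) ^ 2) :=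
  m_energy_identity_general γ₁ μ M₁ u ux uxx uxxx uxxt ρ ρx hcu hcux hcuxx hcuxxx hcuxxt hcρ hcρx
    hpu hpρ hux huxx huxxx huxxt hpde1
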